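/- arXiv:2301.09392 — 2 statements merged into one kernel-verified Lean document; each statement's English description precedes it below -/
import Mathlib

section
/- For all nonnegative real numbers s and t, one has st / log(e + st) ≤ t + e^s. -/
/-- For all nonnegative reals `s` and `t`, one has `s*t / log(e + s*t) ≤ t + e^s`. -/
theorem product_log_inequality (s t : ℝ) (hs : 0 ≤ s) (ht : 0 ≤ t) :
    s * t / Real.log (Real.exp 1 + s * t) ≤ t + Real.exp s := by
  have hst : 0 ≤ s * t := mul_nonneg hs ht
  have hpos : 0 < Real.exp 1 + s * t := by positivity
  have hL1 : 1 ≤ Real.log (Real.exp 1 + s * t) := by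
    calc (1:ℝ) = Real.log (Real.exp 1) := (Real.log_exp 1).symm
      _ ≤ _ := Real.log_le_log (Real.exp_pos 1) (by linarith)
  have hL0 : 0 < Real.log (Real.exp 1 + s * t) := by linarith
  rcases le_or_gt s (Real.log (Real.exp 1 + s * t)) with h | h
  · rw [div_le_iff₀ hL0]
    have h1 : s * t ≤ t * Real.log (Real.exp 1 + s * t) := by
      calc s * t = t * s := mul_comm _ _
        _ ≤ t * Real.log (Real.exp 1 + s * t) := by
            exact mul_le_mul_of_nonneg_left h ht
    nlinarith [Real.exp_pos s, hL0]
  · have h2 : Real.exp 1 + s * t < Real.exp s := by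
      have := Real.exp_log hpos
      calc Real.exp 1 + s * t = Real.exp (Real.log (Real.exp 1 + s * t)) := this.symm
        _ < Real.exp s := Real.exp_lt_exp.mpr h
    have h3 : s * t / Real.log (Real.exp 1 + s * t) ≤ s * t :=
      div_le_self hst hL1
    have := Real.exp_pos 1
    linarith
end

section
/- Let μ be an m-increasing Borel probability measure on [0,1) (i.e. m(I) ≤ C m(Î) for all dyadic intervals I, where Î is the dyadic parent). Then there exists a constant C' > 0 such that for every martingale jump w with respect to some n (w is F_n-measurable, E_{n−1}(w) = 0), the dyadic Hilbert transform H_D(w) = Σ_{I ∈ A(F_n)} δ(I) ⟨w, h_Î⟩ h_I satisfies ‖H_D(w)‖_{L¹(μ)} ≤ C' ‖w‖_{L¹(μ)}. -/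
/-!
The sign `δ(I)` is harmless in `L¹`: bounding termwise, `‖H_D w‖₁ ≤ Σ_I |⟨w, h_Î⟩| ‖h_I‖₁`.
Since `|h_Î| ≤ m(Î)^{-1/2}` on `Î`, each coefficient satisfies `√m(Î) |⟨w, h_Î⟩| ≤ ∫_Î |w|`, while
`‖h_I‖₁ ≤ 2 √m(I) ≤ 2 √C √m(Î)` by the `m`-increasing condition. Each parent `Î` has two children,
so the sum is at most `4 √C Σ_Î ∫_Î |w| ≤ 4 √C ‖w‖₁`.
-/

open MeasureTheory ENNReal

/-- The dyadic interval `[k/2^n, (k+1)/2^n)`. -/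
def dyadicI (n k : ℕ) : Set ℝ := Set.Ico ((k : ℝ) / 2 ^ n) (((k : ℝ) + 1) / 2 ^ n)

/-- The σ-algebra on `[0,1)` generated by the dyadic intervals of generation `n`. -/
def dyadicF (n : ℕ) : MeasurableSpace ℝ :=
  MeasurableSpace.generateFrom {s | ∃ k < 2 ^ n, s = dyadicI n k}

/-- `m(I) = μ(I₋)μ(I₊)/μ(I)` for `I = dyadicI n k`. -/
noncomputable def mval (μ : Measure ℝ) (n k : ℕ) : ℝ :=
  (μ (dyadicI (n + 1) (2 * k))).toReal * (μ (dyadicI (n + 1) (2 * k + 1))).toReal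
    / (μ (dyadicI n k)).toReal

/-- The Haar-type function `h_I` for `I = dyadicI n k`. -/
noncomputable def haarFn (μ : Measure ℝ) (n k : ℕ) : ℝ → ℝ := fun x =>
  Real.sqrt (mval μ n k) *
    ((dyadicI (n + 1) (2 * k)).indicator
        (fun _ => ((μ (dyadicI (n + 1) (2 * k))).toReal)⁻¹) x
      - (dyadicI (n + 1) (2 * k + 1)).indicator
        (fun _ => ((μ (dyadicI (n + 1) (2 * k + 1))).toReal)⁻¹) x)

lemma measurableSet_dyadicI (n k : ℕ) : MeasurableSet (dyadicI n k) := measurableSet_Ico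

lemma dyadicI_subset_of_div_two_eq {n k j : ℕ} (h : k / 2 = j) :
    dyadicI (n + 1) k ⊆ dyadicI n j := by
  have h2 : (0 : ℝ) < 2 ^ n := by positivity
  have hlo : (2 * j : ℝ) ≤ k := by exact_mod_cast (show 2 * j ≤ k by omega)
  have hhi : (k + 1 : ℝ) ≤ 2 * (j + 1) := by exact_mod_cast (show k + 1 ≤ 2 * (j + 1) by omega)
  refine Set.Ico_subset_Ico ?_ ?_ <;>
    rw [pow_succ, div_le_div_iff₀ (by positivity) (by positivity)] <;> nlinarith

lemma dyadicI_disjoint (n : ℕ) {j j' : ℕ} (h : j ≠ j') :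
    Disjoint (dyadicI n j) (dyadicI n j') := by
  wlog hlt : j < j' generalizing j j'
  · exact (this h.symm (h.lt_or_gt.resolve_left hlt)).symm
  rw [dyadicI, dyadicI, Set.Ico_disjoint_Ico]
  refine (min_le_left _ _).trans (le_trans ?_ (le_max_right _ _))
  gcongr
  exact_mod_cast hlt

lemma mval_nonneg (μ : Measure ℝ) (n k : ℕ) : 0 ≤ mval μ n k := by
  unfold mval; positivity

section HaarFunction

variable (μ : Measure ℝ) (n k : ℕ)

lemma measurable_haarFn : Measurable (haarFn μ n k) :=
  ((measurable_const.indicator (measurableSet_dyadicI _ _)).sub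
    (measurable_const.indicator (measurableSet_dyadicI _ _))).const_mul _

lemma integrable_haarFn [IsFiniteMeasure μ] : Integrable (haarFn μ n k) μ :=
  (((integrable_const _).indicator (measurableSet_dyadicI _ _)).sub
    ((integrable_const _).indicator (measurableSet_dyadicI _ _))).const_mul _

lemma abs_haarFn_le (x : ℝ) :
    |haarFn μ n k x| ≤ √(mval μ n k) *
      ((dyadicI (n + 1) (2 * k)).indicator (fun _ => (μ (dyadicI (n + 1) (2 * k))).toReal⁻¹) x
        + (dyadicI (n + 1) (2 * k + 1)).indicator
            (fun _ => (μ (dyadicI (n + 1) (2 * k + 1))).toReal⁻¹) x) := by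
  rw [haarFn, abs_mul, abs_of_nonneg (Real.sqrt_nonneg _)]
  gcongr
  refine (abs_sub _ _).trans (add_le_add ?_ ?_) <;>
    exact (abs_of_nonneg (Set.indicator_nonneg (fun _ _ => by positivity) x)).le

lemma integral_abs_haarFn_le [IsFiniteMeasure μ] :
    ∫ x, |haarFn μ n k x| ∂μ ≤ 2 * √(mval μ n k) := by
  have hint : ∀ j, Integrable ((dyadicI (n + 1) j).indicator
      (fun _ => (μ (dyadicI (n + 1) j)).toReal⁻¹)) μ := fun j =>
    (integrable_const _).indicator (measurableSet_dyadicI _ _)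
  calc ∫ x, |haarFn μ n k x| ∂μ
      ≤ ∫ x, √(mval μ n k) *
          ((dyadicI (n + 1) (2 * k)).indicator
              (fun _ => (μ (dyadicI (n + 1) (2 * k))).toReal⁻¹) x
            + (dyadicI (n + 1) (2 * k + 1)).indicator
              (fun _ => (μ (dyadicI (n + 1) (2 * k + 1))).toReal⁻¹) x) ∂μ :=
        integral_mono (integrable_haarFn μ n k).abs (((hint _).add (hint _)).const_mul _)
          (abs_haarFn_le μ n k)
    _ = √(mval μ n k) * ((μ (dyadicI (n + 1) (2 * k))).toReal
            * (μ (dyadicI (n + 1) (2 * k))).toReal⁻¹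
          + (μ (dyadicI (n + 1) (2 * k + 1))).toReal
            * (μ (dyadicI (n + 1) (2 * k + 1))).toReal⁻¹) := by
        rw [integral_const_mul, integral_add (hint _) (hint _),
          integral_indicator_const _ (measurableSet_dyadicI _ _),
          integral_indicator_const _ (measurableSet_dyadicI _ _)]
        rfl
    _ ≤ √(mval μ n k) * (1 + 1) := by gcongr <;> exact mul_inv_le_one
    _ = 2 * √(mval μ n k) := by ring

lemma mval_le_left [IsFiniteMeasure μ] : mval μ n k ≤ (μ (dyadicI (n + 1) (2 * k))).toReal :=
  div_le_of_le_mul₀ toReal_nonneg toReal_nonneg <| mul_le_mul_of_nonneg_left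
    (measureReal_mono (dyadicI_subset_of_div_two_eq (by omega))) toReal_nonneg

lemma mval_le_right [IsFiniteMeasure μ] :
    mval μ n k ≤ (μ (dyadicI (n + 1) (2 * k + 1))).toReal :=
  div_le_of_le_mul₀ toReal_nonneg toReal_nonneg <| (mul_comm _ _).le.trans <|
    mul_le_mul_of_nonneg_left
      (measureReal_mono (dyadicI_subset_of_div_two_eq (by omega))) toReal_nonneg

lemma sqrt_mval_mul_abs_haarFn_le [IsFiniteMeasure μ] (x : ℝ) :
    √(mval μ n k) * |haarFn μ n k x| ≤ (dyadicI n k).indicator 1 x := by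
  have key : ∀ a : ℝ, mval μ n k ≤ a → √(mval μ n k) * |√(mval μ n k) * a⁻¹| ≤ 1 := by
    intro a ha
    have ha0 : 0 ≤ a := (mval_nonneg μ n k).trans ha
    rw [abs_of_nonneg (by positivity), ← mul_assoc, Real.mul_self_sqrt (mval_nonneg μ n k)]
    exact (mul_le_mul_of_nonneg_right ha (inv_nonneg.2 ha0)).trans mul_inv_le_one
  have hLR : Disjoint (dyadicI (n + 1) (2 * k)) (dyadicI (n + 1) (2 * k + 1)) :=
    dyadicI_disjoint _ (by omega)
  by_cases hL : x ∈ dyadicI (n + 1) (2 * k)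
  · have hR : x ∉ dyadicI (n + 1) (2 * k + 1) := Set.disjoint_left.1 hLR hL
    rw [Set.indicator_of_mem (dyadicI_subset_of_div_two_eq (by omega) hL)]
    simpa [haarFn, hL, hR] using key _ (mval_le_left μ n k)
  by_cases hR : x ∈ dyadicI (n + 1) (2 * k + 1)
  · rw [Set.indicator_of_mem (dyadicI_subset_of_div_two_eq (by omega) hR)]
    simpa [haarFn, hL, hR] using key _ (mval_le_right μ n k)
  simp only [haarFn, Set.indicator_of_notMem hL, Set.indicator_of_notMem hR, sub_zero, mul_zero,
    abs_zero]
  exact Set.indicator_nonneg (fun _ _ => zero_le_one) x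

lemma sqrt_mval_mul_abs_integral_mul_haarFn_le [IsFiniteMeasure μ] {w : ℝ → ℝ}
    (hw : Integrable w μ) :
    √(mval μ n k) * |∫ y, w y * haarFn μ n k y ∂μ| ≤ ∫ y in dyadicI n k, |w y| ∂μ := by
  have hbdd : ∀ y, ‖haarFn μ n k y‖ ≤ √(mval μ n k) *
      ((μ (dyadicI (n + 1) (2 * k))).toReal⁻¹ + (μ (dyadicI (n + 1) (2 * k + 1))).toReal⁻¹) :=
    fun y => (abs_haarFn_le μ n k y).trans <| by
      gcongr <;> exact Set.indicator_le_self' (fun _ _ => by positivity) y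
  have hint : Integrable (fun y => w y * haarFn μ n k y) μ :=
    hw.mul_bdd (measurable_haarFn μ n k).aestronglyMeasurable (.of_forall hbdd)
  have hpointwise : ∀ y, √(mval μ n k) * |w y * haarFn μ n k y|
      ≤ (dyadicI n k).indicator (fun y => |w y|) y := fun y =>
    calc √(mval μ n k) * |w y * haarFn μ n k y|
        = |w y| * (√(mval μ n k) * |haarFn μ n k y|) := by rw [abs_mul]; ring
      _ ≤ |w y| * (dyadicI n k).indicator 1 y := by
        gcongr; exact sqrt_mval_mul_abs_haarFn_le μ n k y
      _ = (dyadicI n k).indicator (fun y => |w y|) y := by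
        by_cases hy : y ∈ dyadicI n k <;> simp [hy]
  calc √(mval μ n k) * |∫ y, w y * haarFn μ n k y ∂μ|
      ≤ ∫ y, √(mval μ n k) * |w y * haarFn μ n k y| ∂μ := by
        rw [integral_const_mul]; gcongr; exact abs_integral_le_integral_abs
    _ ≤ ∫ y, (dyadicI n k).indicator (fun y => |w y|) y ∂μ :=
        integral_mono (hint.abs.const_mul _) (hw.abs.indicator (measurableSet_dyadicI n k))
          hpointwise
    _ = ∫ y in dyadicI n k, |w y| ∂μ := integral_indicator (measurableSet_dyadicI n k)

end HaarFunction

lemma abs_integral_mul_haarFn_mul_integral_abs_haarFn_le (μ : Measure ℝ) [IsFiniteMeasure μ]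
    {C : ℝ} {n k j : ℕ} (hincr : mval μ (n + 1) k ≤ C * mval μ n j)
    {w : ℝ → ℝ} (hw : Integrable w μ) :
    |∫ y, w y * haarFn μ n j y ∂μ| * ∫ x, |haarFn μ (n + 1) k x| ∂μ
      ≤ 2 * √C * ∫ y in dyadicI n j, |w y| ∂μ :=
  calc |∫ y, w y * haarFn μ n j y ∂μ| * ∫ x, |haarFn μ (n + 1) k x| ∂μ
      ≤ |∫ y, w y * haarFn μ n j y ∂μ| * (2 * √(mval μ (n + 1) k)) := by
        gcongr; exact integral_abs_haarFn_le μ (n + 1) k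
    _ ≤ |∫ y, w y * haarFn μ n j y ∂μ| * (2 * (√C * √(mval μ n j))) := by
        rw [← Real.sqrt_mul' C (mval_nonneg μ n j)]; gcongr
    _ = 2 * √C * (√(mval μ n j) * |∫ y, w y * haarFn μ n j y ∂μ|) := by ring
    _ ≤ 2 * √C * ∫ y in dyadicI n j, |w y| ∂μ := by
        gcongr; exact sqrt_mval_mul_abs_integral_mul_haarFn_le μ n j hw

lemma integral_abs_sum_mul_le {α ι : Type*} [MeasurableSpace α] {μ : Measure α} (s : Finset ι)
    (c : ι → ℝ) {f : ι → α → ℝ} (hf : ∀ i ∈ s, Integrable (f i) μ) :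
    ∫ x, |∑ i ∈ s, c i * f i x| ∂μ ≤ ∑ i ∈ s, |c i| * ∫ x, |f i x| ∂μ := by
  have hcf : ∀ i ∈ s, Integrable (fun x => |c i * f i x|) μ := fun i hi =>
    ((hf i hi).const_mul (c i)).abs
  calc ∫ x, |∑ i ∈ s, c i * f i x| ∂μ
      ≤ ∫ x, ∑ i ∈ s, |c i * f i x| ∂μ :=
        integral_mono (integrable_finsetSum s fun i hi => (hf i hi).const_mul _).abs
          (integrable_finsetSum s hcf) fun x => Finset.abs_sum_le_sum_abs _ _
    _ = ∑ i ∈ s, ∫ x, |c i * f i x| ∂μ := integral_finsetSum s hcf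
    _ = ∑ i ∈ s, |c i| * ∫ x, |f i x| ∂μ := by simp only [abs_mul, integral_const_mul]

lemma sum_range_two_mul_div_two {M : Type*} [AddCommMonoid M] (g : ℕ → M) (m : ℕ) :
    ∑ k ∈ Finset.range (2 * m), g (k / 2) = 2 • ∑ j ∈ Finset.range m, g j := by
  induction m with
  | zero => simp
  | succ m ih =>
    rw [Nat.mul_succ, Finset.sum_range_succ, Finset.sum_range_succ, ih, Finset.sum_range_succ,
      show (2 * m + 1) / 2 = m by omega, show 2 * m / 2 = m by omega, smul_add, two_nsmul (g m),
      add_assoc]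

lemma sum_setIntegral_abs_dyadicI_le (μ : Measure ℝ) {w : ℝ → ℝ} (hw : Integrable w μ) (p N : ℕ) :
    ∑ j ∈ Finset.range N, ∫ x in dyadicI p j, |w x| ∂μ ≤ ∫ x, |w x| ∂μ := by
  rw [← integral_biUnion_finset _ (fun j _ => measurableSet_dyadicI p j)
    (fun i _ j _ hij => dyadicI_disjoint p hij) (fun j _ => hw.abs.integrableOn)]
  exact setIntegral_le_integral hw.abs (.of_forall fun x => abs_nonneg _)

theorem dyadic_Hilbert_jump_L1_general (μ : Measure ℝ) [IsProbabilityMeasure μ]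
    (C : ℝ) (hC : 0 < C)
    (hincr : ∀ n k : ℕ, k < 2 ^ (n + 1) → mval μ (n + 1) k ≤ C * mval μ n (k / 2)) :
    ∃ C' : ℝ, 0 < C' ∧
      ∀ (n : ℕ) (w : ℝ → ℝ), 1 ≤ n → Integrable w μ →
        StronglyMeasurable[dyadicF n] w → (μ[w | dyadicF (n - 1)]) =ᵐ[μ] 0 →
        ∫ x, |∑ k ∈ Finset.range (2 ^ n),
            (if k % 2 = 0 then (1 : ℝ) else -1)
              * (∫ y, w y * haarFn μ (n - 1) (k / 2) y ∂μ) * haarFn μ n k x| ∂μ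
          ≤ C' * ∫ x, |w x| ∂μ := by
  refine ⟨4 * √C, by positivity, ?_⟩
  rintro n w hn hw - -
  obtain ⟨m, rfl⟩ := Nat.exists_eq_add_of_le' hn
  rw [Nat.add_sub_cancel]
  have hsign : ∀ k : ℕ, |(if k % 2 = 0 then (1 : ℝ) else -1)| = 1 := fun k => by
    split_ifs <;> simp
  calc _ ≤ ∑ k ∈ Finset.range (2 ^ (m + 1)), |(if k % 2 = 0 then (1 : ℝ) else -1)
          * ∫ y, w y * haarFn μ m (k / 2) y ∂μ| * ∫ x, |haarFn μ (m + 1) k x| ∂μ :=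
        integral_abs_sum_mul_le _ _ fun k _ => integrable_haarFn μ _ k
    _ ≤ ∑ k ∈ Finset.range (2 ^ (m + 1)), 2 * √C * ∫ y in dyadicI m (k / 2), |w y| ∂μ :=
        Finset.sum_le_sum fun k hk => by
          rw [abs_mul, hsign, one_mul]
          exact abs_integral_mul_haarFn_mul_integral_abs_haarFn_le μ
            (hincr m k (Finset.mem_range.1 hk)) hw
    _ = 2 * √C * (2 * ∑ j ∈ Finset.range (2 ^ m), ∫ y in dyadicI m j, |w y| ∂μ) := by
        rw [← Finset.mul_sum, pow_succ',
          sum_range_two_mul_div_two (fun j => ∫ y in dyadicI m j, |w y| ∂μ), nsmul_eq_mul,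
          Nat.cast_ofNat]
    _ ≤ 2 * √C * (2 * ∫ x, |w x| ∂μ) := by
        gcongr; exact sum_setIntegral_abs_dyadicI_le μ hw m _
    _ = 4 * √C * ∫ x, |w x| ∂μ := by ring

/-- If `μ` is an `m`-increasing Borel probability measure on `[0,1)`, then there is `C' > 0`
such that for every martingale jump `w` with respect to some generation `n ≥ 1`, the dyadic
Hilbert transform `H_D(w) = Σ_{I ∈ A(F_n)} δ(I) ⟨w, h_Î⟩ h_I` satisfies
`‖H_D(w)‖_{L¹(μ)} ≤ C' ‖w‖_{L¹(μ)}`. -/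
theorem dyadic_Hilbert_jump_L1 (μ : Measure ℝ) [IsProbabilityMeasure μ]
    (hsupp : μ (Set.Ico (0 : ℝ) 1) = 1)
    (hpos : ∀ n k : ℕ, k < 2 ^ n → 0 < μ (dyadicI n k))
    (C : ℝ) (hC : 0 < C)
    (hincr : ∀ n k : ℕ, k < 2 ^ (n + 1) → mval μ (n + 1) k ≤ C * mval μ n (k / 2)) :
    ∃ C' : ℝ, 0 < C' ∧
      ∀ (n : ℕ) (w : ℝ → ℝ), 1 ≤ n → Integrable w μ →
        StronglyMeasurable[dyadicF n] w → (μ[w | dyadicF (n - 1)]) =ᵐ[μ] 0 →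
        ∫ x, |∑ k ∈ Finset.range (2 ^ n),
            (if k % 2 = 0 then (1 : ℝ) else -1)
              * (∫ y, w y * haarFn μ (n - 1) (k / 2) y ∂μ) * haarFn μ n k x| ∂μ
          ≤ C' * ∫ x, |w x| ∂μ :=
  dyadic_Hilbert_jump_L1_general μ C hC hincr
end
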